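/- Let I be a nonempty finite index set of images with nonnegative weights w : I → ℝ summing to 1. For each i ∈ I let q(i) ∈ ℝ² be a logit vector with q(i)₁ > q(i)₂ (equivalently, p₁^{T}(q(i)) > p₂^{T}(q(i)) for every temperature T > 0), and let y(i) ∈ ℝ² be an oracle label with y(i)₁ > 0 and y(i)₂ > 0. Let t₁, t₂ be temperatures with 1 ≤ t₁ < t₂. If for every i ∈ I the condition y(i)₁ / y(i)₂ ≤ |log(p₂^{t₂}(q(i)) / p₂^{t₁}(q(i)))| / |log(p₁^{t₂}(q(i)) / p₁^{t₁}(q(i)))| holds, then the expected generalization gap ΔL^{t₁→t₂} = Σ_{i∈I} w(i) · ( −y(i)₁ · log(p₁^{t₂}(q(i)) / p₁^{t₁}(q(i))) − y(i)₂ · log(p₂^{t₂}(q(i)) / p₂^{t₁}(q(i))) ) satisfies ΔL^{t₁→t₂} ≤ 0. -/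
import Mathlib


/-- Temperature-`T` softmax: `p_i^T(q) = exp(q_i/T) / Σ_j exp(q_j/T)`. -/
noncomputable def softmaxT {k : ℕ} (T : ℝ) (q : Fin k → ℝ) (i : Fin k) : ℝ :=
  Real.exp (q i / T) / ∑ j, Real.exp (q j / T)

lemma softmaxT_pos {k : ℕ} (T : ℝ) (q : Fin k → ℝ) (i : Fin k) [NeZero k] :
    0 < softmaxT T q i := by
  apply div_pos (Real.exp_pos _)
  apply Finset.sum_pos (fun j _ => Real.exp_pos _)
  exact Finset.univ_nonempty

lemma softmax2_lt (a b t₁ t₂ : ℝ) (hab : b < a) (ht1 : 0 < t₁) (ht12 : t₁ < t₂)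
    (q : Fin 2 → ℝ) (hq0 : q 0 = a) (hq1 : q 1 = b) :
    softmaxT t₂ q 0 < softmaxT t₁ q 0 := by
  have ht2 : 0 < t₂ := ht1.trans ht12
  have hkey : a / t₂ + b / t₁ < a / t₁ + b / t₂ := by
    have h := div_lt_div_of_pos_left (sub_pos.mpr hab) ht1 ht12
    rw [sub_div, sub_div] at h
    linarith
  have hE : Real.exp (a / t₂) * (Real.exp (a / t₁) + Real.exp (b / t₁)) <
      Real.exp (a / t₁) * (Real.exp (a / t₂) + Real.exp (b / t₂)) := by
    have h1 := Real.exp_lt_exp.mpr hkey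
    rw [Real.exp_add, Real.exp_add] at h1
    nlinarith [h1]
  have hd1 : 0 < Real.exp (a / t₁) + Real.exp (b / t₁) := by positivity
  have hd2 : 0 < Real.exp (a / t₂) + Real.exp (b / t₂) := by positivity
  simp only [softmaxT, Fin.sum_univ_two, hq0, hq1]
  rw [div_lt_div_iff₀ hd2 hd1]
  linarith

lemma softmax2_gt (a b t₁ t₂ : ℝ) (hab : b < a) (ht1 : 0 < t₁) (ht12 : t₁ < t₂)
    (q : Fin 2 → ℝ) (hq0 : q 0 = a) (hq1 : q 1 = b) :
    softmaxT t₁ q 1 < softmaxT t₂ q 1 := by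
  have ht2 : 0 < t₂ := ht1.trans ht12
  have hkey : a / t₂ + b / t₁ < a / t₁ + b / t₂ := by
    have h := div_lt_div_of_pos_left (sub_pos.mpr hab) ht1 ht12
    rw [sub_div, sub_div] at h
    linarith
  have hE : Real.exp (b / t₁) * (Real.exp (a / t₂) + Real.exp (b / t₂)) <
      Real.exp (b / t₂) * (Real.exp (a / t₁) + Real.exp (b / t₁)) := by
    have h1 := Real.exp_lt_exp.mpr hkey
    rw [Real.exp_add, Real.exp_add] at h1
    nlinarith [h1]
  have hd1 : 0 < Real.exp (a / t₁) + Real.exp (b / t₁) := by positivity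
  have hd2 : 0 < Real.exp (a / t₂) + Real.exp (b / t₂) := by positivity
  simp only [softmaxT, Fin.sum_univ_two, hq0, hq1]
  rw [div_lt_div_iff₀ hd1 hd2]
  linarith

/-- Theorem 1 of the paper (LTD): if for every image the oracle-label ratio
condition holds, then the expected generalization gap `ΔL^{t₁→t₂}` is nonpositive. -/
theorem generalization_gap_nonpos
    {ι : Type*} [Fintype ι] [Nonempty ι]
    (w : ι → ℝ) (hw0 : ∀ i, 0 ≤ w i) (hw1 : ∑ i, w i = 1)
    (q : ι → Fin 2 → ℝ) (hq : ∀ i, q i 0 > q i 1)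
    (y : ι → Fin 2 → ℝ) (hy1 : ∀ i, 0 < y i 0) (hy2 : ∀ i, 0 < y i 1)
    (t₁ t₂ : ℝ) (ht1 : 1 ≤ t₁) (ht12 : t₁ < t₂)
    (hcond : ∀ i, y i 0 / y i 1 ≤
      |Real.log (softmaxT t₂ (q i) 1 / softmaxT t₁ (q i) 1)| /
      |Real.log (softmaxT t₂ (q i) 0 / softmaxT t₁ (q i) 0)|) :
    ∑ i, w i *
      (- y i 0 * Real.log (softmaxT t₂ (q i) 0 / softmaxT t₁ (q i) 0)
       - y i 1 * Real.log (softmaxT t₂ (q i) 1 / softmaxT t₁ (q i) 1)) ≤ 0 := by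
  have ht1' : (0 : ℝ) < t₁ := lt_of_lt_of_le one_pos ht1
  apply Finset.sum_nonpos
  intro i _
  apply mul_nonpos_of_nonneg_of_nonpos (hw0 i)
  set A := Real.log (softmaxT t₂ (q i) 0 / softmaxT t₁ (q i) 0) with hA
  set B := Real.log (softmaxT t₂ (q i) 1 / softmaxT t₁ (q i) 1) with hB
  have hp10 : 0 < softmaxT t₁ (q i) 0 := softmaxT_pos _ _ _
  have hp20 : 0 < softmaxT t₂ (q i) 0 := softmaxT_pos _ _ _
  have hp11 : 0 < softmaxT t₁ (q i) 1 := softmaxT_pos _ _ _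
  have hp21 : 0 < softmaxT t₂ (q i) 1 := softmaxT_pos _ _ _
  have hAneg : A < 0 := by
    rw [hA]
    apply Real.log_neg (div_pos hp20 hp10)
    rw [div_lt_one hp10]
    exact softmax2_lt (q i 0) (q i 1) t₁ t₂ (hq i) ht1' ht12 (q i) rfl rfl
  have hBpos : 0 < B := by
    rw [hB]
    apply Real.log_pos
    rw [lt_div_iff₀ hp11, one_mul]
    exact softmax2_gt (q i 0) (q i 1) t₁ t₂ (hq i) ht1' ht12 (q i) rfl rfl
  have hc := hcond i
  rw [← hA, ← hB, abs_of_pos hBpos, abs_of_neg hAneg] at hc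
  have h2 : y i 0 * (-A) ≤ B * y i 1 :=
    (div_le_div_iff₀ (hy2 i) (neg_pos.mpr hAneg)).mp hc
  nlinarith [hy1 i, hy2 i]
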